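/- Let d > 1 be an integer. Then for every n ≥ 1 and every λ ∈ ℂ, log max{1, |(f_λ^n)'(λ)|} ≤ (d^n−1)·g_{H∞}(λ) + 2n·log d. -/

import Mathlib

open Polynomial MeasureTheory Filter

/-- The `n`-th iterate of the unicritical polynomial `f_λ(z) = z^d + λ` (as a polynomial in `z`). -/
noncomputable def uniIter (d : ℕ) (lam : ℂ) : ℕ → Polynomial ℂ
  | 0 => Polynomial.X
  | n + 1 => (Polynomial.X ^ d + Polynomial.C lam).comp (uniIter d lam n)

/-!
By the chain rule `(f_λ^n)'(λ) = ∏_{k<n} d · (f_λ^k(λ))^(d-1)`, so `log⁺` of the derivative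
is at most `∑_{k<n} (log d + (d-1) log⁺ |f_λ^k(λ)|)`. On the escape region
`|z| ≥ |λ|, |z|^(d-1) ≥ 2`, which `f_λ` maps into itself, `|f_λ(z)| ≥ |z|^d / 2`, i.e. the
escape potential `(d-1) log |z| - log 2` is at least multiplied by `d` at each step.
Comparing with the Green function gives `(d-1) log⁺ |f_λ^k(λ)| ≤ (d-1) d^k g(λ) + log 2`,
and summing the geometric series yields the bound.
-/

open Real Finset

def escapeRegion (d : ℕ) (c : ℂ) : Set ℂ := {z | ‖c‖ ≤ ‖z‖ ∧ 2 ≤ ‖z‖ ^ (d - 1)}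

noncomputable def escapePotential (d : ℕ) (z : ℂ) : ℝ := (d - 1) * log ‖z‖ - log 2

section EscapeRegion

variable {d : ℕ} {c z : ℂ}

lemma one_le_of_mem_escapeRegion (hz : z ∈ escapeRegion d c) : 1 ≤ d := by
  by_contra! h
  have := hz.2
  simp [Nat.lt_one_iff.mp h] at this

lemma one_le_norm_of_mem_escapeRegion (hz : z ∈ escapeRegion d c) : 1 ≤ ‖z‖ := by
  by_contra! h
  have := hz.2
  have : ‖z‖ ^ (d - 1) ≤ 1 := pow_le_one₀ (norm_nonneg z) h.le
  linarith

lemma norm_pow_le_two_mul_norm_pow_add (hz : z ∈ escapeRegion d c) :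
    ‖z‖ ^ d ≤ 2 * ‖z ^ d + c‖ := by
  obtain ⟨hc, h2⟩ := hz
  have hpow : ‖z‖ ^ d = ‖z‖ ^ (d - 1) * ‖z‖ := by
    rw [← pow_succ, Nat.sub_add_cancel (one_le_of_mem_escapeRegion ⟨hc, h2⟩)]
  have hrev : ‖z ^ d‖ - ‖c‖ ≤ ‖z ^ d + c‖ := by
    simpa using norm_sub_norm_le (z ^ d) (-c)
  rw [norm_pow] at hrev
  nlinarith [norm_nonneg z]

lemma norm_le_norm_pow_add (hz : z ∈ escapeRegion d c) : ‖z‖ ≤ ‖z ^ d + c‖ := by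
  have hpow : ‖z‖ ^ d = ‖z‖ ^ (d - 1) * ‖z‖ := by
    rw [← pow_succ, Nat.sub_add_cancel (one_le_of_mem_escapeRegion hz)]
  nlinarith [norm_pow_le_two_mul_norm_pow_add hz, hz.2, norm_nonneg z]

lemma mapsTo_escapeRegion : Set.MapsTo (fun z ↦ z ^ d + c) (escapeRegion d c) (escapeRegion d c) :=
  fun z hz ↦ ⟨hz.1.trans (norm_le_norm_pow_add hz),
    hz.2.trans (pow_le_pow_left₀ (norm_nonneg z) (norm_le_norm_pow_add hz) _)⟩

lemma mul_escapePotential_le (hz : z ∈ escapeRegion d c) :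
    d * escapePotential d z ≤ escapePotential d (z ^ d + c) := by
  have hd : (1 : ℝ) ≤ d := by exact_mod_cast one_le_of_mem_escapeRegion hz
  have hz0 : 0 < ‖z‖ := one_pos.trans_le (one_le_norm_of_mem_escapeRegion hz)
  have hlog : d * log ‖z‖ ≤ log 2 + log ‖z ^ d + c‖ := by
    rw [← log_pow, ← log_mul two_ne_zero (by linarith [norm_le_norm_pow_add hz])]
    exact log_le_log (by positivity) (norm_pow_le_two_mul_norm_pow_add hz)
  unfold escapePotential
  nlinarith

end EscapeRegion

section Orbit

variable {d : ℕ} {c : ℂ} {z : ℕ → ℂ} (hz : ∀ k, z (k + 1) = z k ^ d + c)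
include hz

lemma orbit_mem_escapeRegion {k : ℕ} (hk : z k ∈ escapeRegion d c) (m : ℕ) :
    z (k + m) ∈ escapeRegion d c := by
  induction m with
  | zero => exact hk
  | succ m ih => rw [← add_assoc, hz]; exact mapsTo_escapeRegion ih

lemma pow_mul_escapePotential_le {k : ℕ} (hk : z k ∈ escapeRegion d c) (m : ℕ) :
    d ^ m * escapePotential d (z k) ≤ escapePotential d (z (k + m)) := by
  induction m with
  | zero => simp
  | succ m ih =>
    rw [← add_assoc, hz, pow_succ, mul_comm _ (d : ℝ), mul_assoc]
    exact (mul_le_mul_of_nonneg_left ih (Nat.cast_nonneg d)).trans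
      (mul_escapePotential_le (orbit_mem_escapeRegion hz hk m))

/-- A point of the critical orbit with `‖z k‖ ^ (d - 1) ≥ 2` dominates `‖c‖`: otherwise
`z 0 = c` would already lie in the escape region, and the orbit could never come back
below `‖c‖`. -/
lemma norm_le_norm_orbit (hz0 : z 0 = c) {k : ℕ} (h2 : 2 ≤ ‖z k‖ ^ (d - 1)) : ‖c‖ ≤ ‖z k‖ := by
  by_contra! hlt
  have hc : c ∈ escapeRegion d c :=
    ⟨le_rfl, h2.trans (pow_le_pow_left₀ (norm_nonneg _) hlt.le _)⟩
  have := (orbit_mem_escapeRegion hz (k := 0) (by rwa [hz0]) k).1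
  rw [zero_add] at this
  linarith

lemma escapePotential_le_of_tendsto {G : ℝ}
    (hG : Tendsto (fun n ↦ log⁺ ‖z n‖ / d ^ n) atTop (nhds G)) {k : ℕ}
    (hk : z k ∈ escapeRegion d c) :
    escapePotential d (z k) ≤ (d - 1) * d ^ k * G := by
  have hd : (1 : ℝ) ≤ d := by exact_mod_cast one_le_of_mem_escapeRegion hk
  have hdk : (0 : ℝ) < d ^ k := by positivity
  rw [show (d - 1) * d ^ k * G = d ^ k * (G * (d - 1)) by ring, ← div_le_iff₀' hdk]
  refine ge_of_tendsto (hG.mul_const ((d : ℝ) - 1)) (eventually_atTop.2 ⟨k, fun n hn ↦ ?_⟩)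
  obtain ⟨m, rfl⟩ := Nat.exists_eq_add_of_le hn
  have hgrowth : d ^ m * escapePotential d (z k) ≤ (d - 1) * log⁺ ‖z (k + m)‖ := by
    have hlog : log ‖z (k + m)‖ ≤ log⁺ ‖z (k + m)‖ := le_max_right _ _
    have := pow_mul_escapePotential_le hz hk m
    unfold escapePotential at this ⊢
    nlinarith [mul_le_mul_of_nonneg_left hlog (sub_nonneg.mpr hd), log_nonneg one_le_two]
  calc escapePotential d (z k) / d ^ k
      = d ^ m * escapePotential d (z k) / d ^ (k + m) := by
        rw [pow_add]; field_simp
    _ ≤ (d - 1) * log⁺ ‖z (k + m)‖ / d ^ (k + m) := by gcongr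
    _ = log⁺ ‖z (k + m)‖ / d ^ (k + m) * (d - 1) := by ring

lemma mul_posLog_norm_orbit_le (hd : 1 < d) (hz0 : z 0 = c) {G : ℝ}
    (hG : Tendsto (fun n ↦ log⁺ ‖z n‖ / d ^ n) atTop (nhds G)) (k : ℕ) :
    (d - 1) * log⁺ ‖z k‖ ≤ (d - 1) * d ^ k * G + log 2 := by
  have hd1 : (0 : ℝ) < d - 1 := by
    have : (1 : ℝ) < d := by exact_mod_cast hd
    linarith
  rcases le_or_gt ((d - 1) * log⁺ ‖z k‖) (log 2) with hsmall | hlarge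
  · have hG0 : 0 ≤ G := ge_of_tendsto' hG fun n ↦ div_nonneg posLog_nonneg (by positivity)
    have := mul_nonneg (mul_nonneg hd1.le (pow_nonneg (Nat.cast_nonneg d) k)) hG0
    linarith
  have hz1 : 1 ≤ ‖z k‖ := by
    by_contra! h
    rw [(posLog_eq_zero_iff _).mpr (by simpa using h.le)] at hlarge
    linarith [log_nonneg one_le_two]
  rw [posLog_eq_log (by simpa using hz1)] at hlarge ⊢
  have h2 : 2 ≤ ‖z k‖ ^ (d - 1) := by
    have : log 2 < log (‖z k‖ ^ (d - 1)) := by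
      rwa [log_pow, Nat.cast_sub hd.le, Nat.cast_one]
    exact ((log_lt_log_iff two_pos (by positivity)).mp this).le
  have hk : z k ∈ escapeRegion d c := ⟨norm_le_norm_orbit hz hz0 h2, h2⟩
  have := escapePotential_le_of_tendsto hz hG hk
  unfold escapePotential at this
  linarith

end Orbit

lemma uniIter_succ_eval (d : ℕ) (lam z : ℂ) (k : ℕ) :
    (uniIter d lam (k + 1)).eval z = (uniIter d lam k).eval z ^ d + lam := by
  simp [uniIter]

lemma derivative_uniIter_eval (d : ℕ) (lam z : ℂ) (n : ℕ) :
    (derivative (uniIter d lam n)).eval z =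
      ∏ k ∈ range n, (d * (uniIter d lam k).eval z ^ (d - 1)) := by
  induction n with
  | zero => simp [uniIter]
  | succ n ih =>
    rw [prod_range_succ, ← ih, uniIter, derivative_comp]
    simp [derivative_X_pow]

lemma posLog_norm_derivative_uniIter_eval_le (d : ℕ) (lam z : ℂ) (n : ℕ) :
    log⁺ ‖(derivative (uniIter d lam n)).eval z‖ ≤
      ∑ k ∈ range n, (log d + (d - 1 : ℕ) * log⁺ ‖(uniIter d lam k).eval z‖) := by
  rw [derivative_uniIter_eval, norm_prod]
  refine (posLog_prod _ _).trans (sum_le_sum fun k _ ↦ ?_)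
  rw [norm_mul, norm_pow, Complex.norm_natCast, ← posLog_pow]
  exact posLog_nat_mul

theorem stmt8 (d : ℕ) (hd : 1 < d)
    (g : ℂ → ℝ)
    (hg : ∀ lam : ℂ, Tendsto
      (fun n : ℕ => Real.log (max 1 (‖(uniIter d lam n).eval lam‖)) / (d : ℝ) ^ n)
      atTop (nhds (g lam))) :
    ∀ n : ℕ, 1 ≤ n → ∀ lam : ℂ,
      Real.log (max 1 (‖(Polynomial.derivative (uniIter d lam n)).eval lam‖)) ≤
        ((d : ℝ) ^ n - 1) * g lam + 2 * n * Real.log d := by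
  intro n _ lam
  set z : ℕ → ℂ := fun k ↦ (uniIter d lam k).eval lam
  have hz : ∀ k, z (k + 1) = z k ^ d + lam := uniIter_succ_eval d lam lam
  have hG : Tendsto (fun k ↦ log⁺ ‖z k‖ / d ^ k) atTop (nhds (g lam)) := by
    simpa only [posLog_eq_log_max_one (norm_nonneg _)] using hg lam
  have hterm (k : ℕ) :
      log d + (d - 1 : ℕ) * log⁺ ‖z k‖ ≤ d ^ k * ((d - 1) * g lam) + 2 * log d := by
    have := mul_posLog_norm_orbit_le hz hd (by simp [z, uniIter]) hG k
    have : log 2 ≤ log d := log_le_log two_pos (by exact_mod_cast hd)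
    push_cast [Nat.cast_sub hd.le]
    linarith
  rw [← posLog_eq_log_max_one (norm_nonneg _)]
  calc log⁺ ‖(derivative (uniIter d lam n)).eval lam‖
      ≤ ∑ k ∈ range n, (d ^ k * ((d - 1) * g lam) + 2 * log d) :=
        (posLog_norm_derivative_uniIter_eval_le d lam lam n).trans (sum_le_sum fun k _ ↦ hterm k)
    _ = ((d : ℝ) ^ n - 1) * g lam + 2 * n * log d := by
        rw [sum_add_distrib, ← sum_mul, sum_const, card_range, nsmul_eq_mul, ← geom_sum_mul]
        ring
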